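/- If q is an odd prime and p is a prime divisor of 2^q - 1, then p ≡ 1 (mod 2q). -/
import Mathlib


theorem fermat_third_prop (q p : ℕ) (hq : q.Prime) (hqodd : Odd q) (hp : p.Prime)
    (h : p ∣ 2 ^ q - 1) : p % (2 * q) = 1 := by
  haveI := Fact.mk hp
  have hone : 1 ≤ 2 ^ q := Nat.one_le_two_pow
  have hodd : Odd (2 ^ q - 1) := by
    have he : Even (2 ^ q) := (Nat.even_pow' hq.ne_zero).mpr (by norm_num)
    obtain ⟨r, hr⟩ := he
    exact ⟨r - 1, by omega⟩
  have hpne2 : p ≠ 2 := by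
    rintro rfl
    exact (by norm_num : ¬ Odd 2) (hodd.of_dvd_nat h)
  have hcast : ((2 : ZMod p)) ^ q = 1 := by
    have h0 : ((2 ^ q - 1 : ℕ) : ZMod p) = 0 :=
      (ZMod.natCast_eq_zero_iff _ _).mpr h
    have := Nat.cast_sub (R := ZMod p) hone
    rw [this] at h0
    push_cast at h0
    linear_combination h0
  have hdvd : orderOf (2 : ZMod p) ∣ q := orderOf_dvd_of_pow_eq_one hcast
  rcases (Nat.Prime.eq_one_or_self_of_dvd hq _ hdvd) with ho | ho
  · exfalso
    have h21 : (2 : ZMod p) = 1 := orderOf_eq_one_iff.mp ho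
    have : ((2 : ℕ) : ZMod p) = ((1 : ℕ) : ZMod p) := by push_cast; exact h21
    have hmod : 2 ≡ 1 [MOD p] := (ZMod.natCast_eq_natCast_iff _ _ _).mp this
    have : p ∣ 2 - 1 := (Nat.modEq_iff_dvd' (by norm_num)).mp hmod.symm
    have := Nat.le_of_dvd (by norm_num) this
    exact absurd this (by have := hp.two_le; omega)
  · have hne : (2 : ZMod p) ≠ 0 := by
      intro h0
      have : ((2 : ℕ) : ZMod p) = 0 := by push_cast; exact h0
      have := (ZMod.natCast_eq_zero_iff _ _).mp this
      exact hpne2 ((Nat.prime_dvd_prime_iff_eq hp Nat.prime_two).mp this)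
    have hq1 : q ∣ p - 1 := by
      rw [← ho]
      exact orderOf_dvd_of_pow_eq_one (ZMod.pow_card_sub_one_eq_one hne)
    have hp3 : 3 ≤ p := by
      rcases hp.two_le.lt_or_eq with h' | h'
      · omega
      · exact absurd h'.symm hpne2
    have h2 : 2 ∣ p - 1 := by
      have : Odd p := hp.odd_of_ne_two hpne2
      obtain ⟨k, hk⟩ := this
      omega
    have hcop : Nat.Coprime 2 q :=
      (Nat.coprime_primes Nat.prime_two hq).mpr (by rintro rfl; exact (by norm_num : ¬ Odd 2) hqodd)
    have h2q : 2 * q ∣ p - 1 := hcop.mul_dvd_of_dvd_of_dvd h2 hq1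
    obtain ⟨k, hk⟩ := h2q
    have hpeq : p - 1 + 1 = p := Nat.succ_pred_eq_of_pos hp.pos
    have h1lt : 1 < 2 * q := by have := hq.two_le; omega
    rw [← hpeq, hk, Nat.mul_add_mod]
    exact Nat.mod_eq_of_lt h1lt
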